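/- Sheffer F-Binomial Theorem (with converse): let Q be a ∂_F-delta operator with ∂_F-basic sequence (q_n)_{n≥0}. A polynomial sequence (s_n)_{n≥0} with deg s_n = n and s_0 a nonzero constant is a sequence of Sheffer F-polynomials of Q if and only if for all y ∈ K and all n ≥ 0: E^y(∂_F) s_n = Σ_{k=0}^{n} C_F(n,k) · q_{n−k}(y) · s_k, where q_{n−k}(y) ∈ K is the evaluation of q_{n−k} at y. -/

import Mathlib

open Polynomial Finset

/-- F-factorial: `Ffact n = F_n · F_{n-1} ··· F_1`, with `Ffact 0 = 1`. -/
def Ffact (n : ℕ) : ℕ := ∏ i ∈ Finset.range n, Nat.fib (i + 1)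

/-- Fibonomial coefficient `C_F(n,k) = F_n!/(F_k!·F_{n−k}!)`, taken in a field `K`. -/
noncomputable def fibnom (K : Type*) [Field K] (n k : ℕ) : K :=
  (Ffact n : K) / ((Ffact k : K) * (Ffact (n - k) : K))

variable (K : Type*) [Field K] [CharZero K]

/-- The F-derivative `∂_F`, the linear operator with `∂_F x^n = F_n x^{n-1}`. -/
noncomputable def fderivF : Module.End K (Polynomial K) :=
  Polynomial.lsum fun n => (Nat.fib n : K) • (Polynomial.monomial (n - 1) : K →ₗ[K] Polynomial K)

/-- The F-translation operator `E^y(∂_F) = Σ_{k≥0} (y^k/F_k!) ∂_F^k`; since `∂_F`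
strictly decreases degree, the sum truncated at `natDegree p + 1` is the full sum. -/
noncomputable def Etrans (y : K) (p : Polynomial K) : Polynomial K :=
  ∑ k ∈ Finset.range (p.natDegree + 1), (y ^ k / (Ffact k : K)) • ((fderivF K ^ k) p)

/-- A linear operator on `K[x]` is `∂_F`-shift invariant iff it commutes with every
F-translation operator `E^y(∂_F)`. -/
def ShiftInv (T : Module.End K (Polynomial K)) : Prop :=
  ∀ (y : K) (p : Polynomial K), T (Etrans K y p) = Etrans K y (T p)

/-- A `∂_F`-delta operator: a `∂_F`-shift invariant operator `Q` with `Q x` a nonzero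
constant. -/
def DeltaOp (Q : Module.End K (Polynomial K)) : Prop :=
  ShiftInv K Q ∧ ∃ c : K, c ≠ 0 ∧ Q Polynomial.X = Polynomial.C c

/-- `(q_n)` is the `∂_F`-basic polynomial sequence of `Q`. -/
def BasicSeq (Q : Module.End K (Polynomial K)) (q : ℕ → Polynomial K) : Prop :=
  (∀ n : ℕ, (q n).degree = n) ∧ q 0 = 1 ∧ (∀ n : ℕ, 1 ≤ n → (q n).eval 0 = 0) ∧
    ∀ n : ℕ, 1 ≤ n → Q (q n) = (Nat.fib n : K) • q (n - 1)

/-- The operator `x̂_F`, with `x̂_F x^n = ((n+1)/F_{n+1}) x^{n+1}`. -/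
noncomputable def xF : Module.End K (Polynomial K) :=
  Polynomial.lsum fun n =>
    (((n : K) + 1) / (Nat.fib (n + 1) : K)) • (Polynomial.monomial (n + 1) : K →ₗ[K] Polynomial K)

/-- The Graves–Pincherle F-derivative `T' = T∘x̂_F − x̂_F∘T`. -/
noncomputable def GPderiv (T : Module.End K (Polynomial K)) : Module.End K (Polynomial K) :=
  T * xF K - xF K * T

/-- `T = Σ_{k≥0} (a_k/F_k!) Q^k`, expressed via truncations: since a delta operator `Q`
strictly decreases degree, `Q^k p = 0` for `k > natDegree p`, so the truncated sums agree. -/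
def OpSumRep (Q : Module.End K (Polynomial K)) (a : ℕ → K) (T : Module.End K (Polynomial K)) : Prop :=
  ∀ (p : Polynomial K) (N : ℕ), p.natDegree < N →
    T p = ∑ k ∈ Finset.range N, (a k / (Ffact k : K)) • ((Q ^ k) p)

/-- `(s_n)` is a sequence of Sheffer F-polynomials of `Q`. -/
def ShefferSeq (Q : Module.End K (Polynomial K)) (s : ℕ → Polynomial K) : Prop :=
  (∀ n : ℕ, (s n).degree = n) ∧ (∃ c : K, c ≠ 0 ∧ s 0 = Polynomial.C c) ∧
    ∀ n : ℕ, 1 ≤ n → Q (s n) = (Nat.fib n : K) • s (n - 1)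

/-! ### Auxiliary material -/

lemma wb_lt_succ {m : WithBot ℕ} {n : ℕ} : m < ((n+1 : ℕ) : WithBot ℕ) ↔ m ≤ (n : ℕ) := by
  cases m with
  | bot => simpa using WithBot.bot_lt_coe (n+1)
  | coe a =>
    rw [Nat.cast_withBot, Nat.cast_withBot, WithBot.coe_lt_coe, WithBot.coe_le_coe]
    omega

lemma Ffact_zero' : Ffact 0 = 1 := rfl

lemma Ffact_succ (n : ℕ) : Ffact (n+1) = Ffact n * Nat.fib (n+1) := Finset.prod_range_succ _ _

lemma Ffact_pos (n : ℕ) : 0 < Ffact n :=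
  Finset.prod_pos fun i _ => Nat.fib_pos.mpr (Nat.succ_pos i)

variable {K}

lemma Ffact_cast_ne_zero (n : ℕ) : (Ffact n : K) ≠ 0 := by
  exact_mod_cast Nat.cast_ne_zero.mpr (Ffact_pos n).ne'

lemma fib_cast_ne_zero (n : ℕ) : (Nat.fib (n+1) : K) ≠ 0 := by
  exact_mod_cast Nat.cast_ne_zero.mpr (Nat.fib_pos.mpr (Nat.succ_pos n)).ne'

lemma fibnom_self (n : ℕ) : fibnom K n n = 1 := by
  simp [fibnom, Ffact_zero', Ffact_cast_ne_zero n]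

lemma fibnom_zero (n : ℕ) : fibnom K n 0 = 1 := by
  simp [fibnom, Ffact_zero', Ffact_cast_ne_zero n]

/-- `C_F(n+1,k+1)·F_{k+1} = F_{n+1}·C_F(n,k)` for `k ≤ n`. -/
lemma fibnom_id1 {n k : ℕ} (h : k ≤ n) :
    fibnom K (n+1) (k+1) * (Nat.fib (k+1) : K) = (Nat.fib (n+1) : K) * fibnom K n k := by
  have h1 : n + 1 - (k + 1) = n - k := by omega
  have hb : ((Ffact (k+1) : K) * (Ffact (n-k) : K)) ≠ 0 :=
    mul_ne_zero (Ffact_cast_ne_zero _) (Ffact_cast_ne_zero _)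
  have hd : ((Ffact k : K) * (Ffact (n-k) : K)) ≠ 0 :=
    mul_ne_zero (Ffact_cast_ne_zero _) (Ffact_cast_ne_zero _)
  rw [fibnom, fibnom, h1, div_mul_eq_mul_div, mul_div_assoc', div_eq_div_iff hb hd]
  have : Ffact (n+1) * Nat.fib (k+1) * (Ffact k * Ffact (n-k))
      = Nat.fib (n+1) * Ffact n * (Ffact (k+1) * Ffact (n-k)) := by
    rw [Ffact_succ n, Ffact_succ k]; ring
  exact_mod_cast congrArg (Nat.cast : ℕ → K) this

/-- `C_F(n+1,k)·F_{n+1−k} = F_{n+1}·C_F(n,k)` for `k ≤ n`. -/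
lemma fibnom_id2 {n k : ℕ} (h : k ≤ n) :
    fibnom K (n+1) k * (Nat.fib (n+1-k) : K) = (Nat.fib (n+1) : K) * fibnom K n k := by
  have h1 : n + 1 - k = (n - k) + 1 := by omega
  have hb : ((Ffact k : K) * (Ffact (n-k+1) : K)) ≠ 0 :=
    mul_ne_zero (Ffact_cast_ne_zero _) (Ffact_cast_ne_zero _)
  have hd : ((Ffact k : K) * (Ffact (n-k) : K)) ≠ 0 :=
    mul_ne_zero (Ffact_cast_ne_zero _) (Ffact_cast_ne_zero _)
  rw [fibnom, fibnom, h1, div_mul_eq_mul_div, mul_div_assoc', div_eq_div_iff hb hd]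
  have : Ffact (n+1) * Nat.fib (n-k+1) * (Ffact k * Ffact (n-k))
      = Nat.fib (n+1) * Ffact n * (Ffact k * Ffact (n-k+1)) := by
    rw [Ffact_succ n, Ffact_succ (n-k)]; ring
  exact_mod_cast congrArg (Nat.cast : ℕ → K) this

/-! ### Basic facts about `fderivF` -/

lemma fderivF_coeff (p : Polynomial K) (m : ℕ) :
    (fderivF K p).coeff m = (Nat.fib (m+1) : K) * p.coeff (m+1) := by
  induction p using Polynomial.induction_on' with
  | add p r hp hr => simp [map_add, hp, hr]; ring
  | monomial n a =>
    rw [fderivF, Polynomial.lsum_apply, Polynomial.sum_monomial_index _ _ (by simp)]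
    simp only [LinearMap.smul_apply, Polynomial.coeff_smul, coeff_monomial, smul_eq_mul]
    rcases n with _ | j
    · simp
    · simp only [Nat.succ_sub_one, coeff_monomial]
      by_cases hjm : j = m
      · subst hjm; simp
      · rw [if_neg hjm, if_neg (by omega)]
        ring

lemma fderivF_pow_coeff (k : ℕ) (p : Polynomial K) (m : ℕ) :
    ((fderivF K ^ k) p).coeff m
      = (∏ i ∈ Finset.range k, (Nat.fib (m+i+1) : K)) * p.coeff (m+k) := by
  induction k generalizing m with
  | zero => simp
  | succ k ih =>
    rw [pow_succ', Module.End.mul_apply, fderivF_coeff, ih (m+1), Finset.prod_range_succ']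
    have e : (∏ i ∈ Finset.range k, (Nat.fib (m+1+i+1) : K))
        = ∏ i ∈ Finset.range k, (Nat.fib (m+(i+1)+1) : K) := by
      apply Finset.prod_congr rfl
      intro i _
      have : m+1+i+1 = m+(i+1)+1 := by omega
      rw [this]
    rw [e]
    have e2 : m+1+k = m+(k+1) := by omega
    rw [e2]
    have e3 : m+0+1 = m+1 := by omega
    rw [e3]
    ring

lemma fderivF_pow_coeff_zero (k : ℕ) (p : Polynomial K) :
    ((fderivF K ^ k) p).coeff 0 = (Ffact k : K) * p.coeff k := by
  rw [fderivF_pow_coeff]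
  simp only [zero_add, Ffact, Nat.cast_prod]

lemma fderivF_degree_lt {p : Polynomial K} {n : ℕ} (h : p.degree ≤ (n : WithBot ℕ)) :
    (fderivF K p).degree < (n : WithBot ℕ) := by
  rw [Polynomial.degree_lt_iff_coeff_zero]
  intro m hm
  rw [fderivF_coeff]
  have : p.coeff (m+1) = 0 := by
    apply Polynomial.coeff_eq_zero_of_degree_lt
    calc p.degree ≤ (n : WithBot ℕ) := h
    _ < ((m+1 : ℕ) : WithBot ℕ) := by
        rw [wb_lt_succ]; exact_mod_cast hm
  simp [this]

lemma fderivF_pow_eq_zero {k : ℕ} {p : Polynomial K} (h : p.degree < (k : WithBot ℕ)) :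
    (fderivF K ^ k) p = 0 := by
  induction k generalizing p with
  | zero =>
    have : p = 0 := by
      rw [← Polynomial.degree_eq_bot]
      exact Nat.WithBot.lt_zero_iff.mp (by exact_mod_cast h)
    simp [this]
  | succ k ih =>
    rw [pow_succ, Module.End.mul_apply]
    apply ih
    exact fderivF_degree_lt (wb_lt_succ.mp h)

/-! ### Basic facts about `Etrans` -/

lemma Etrans_eq_sum {p : Polynomial K} {N : ℕ} (h : p.natDegree < N) (y : K) :
    Etrans K y p = ∑ k ∈ Finset.range N, (y ^ k / (Ffact k : K)) • ((fderivF K ^ k) p) := by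
  rw [Etrans]
  apply Finset.sum_subset
  · exact Finset.range_subset_range.mpr (by omega)
  · intro k _ hk
    rw [Finset.mem_range, not_lt] at hk
    have : p.degree < (k : WithBot ℕ) := by
      calc p.degree ≤ (p.natDegree : WithBot ℕ) := Polynomial.degree_le_natDegree
      _ < (k : WithBot ℕ) := by
          have : p.natDegree < k := by omega
          exact_mod_cast this
    rw [fderivF_pow_eq_zero this, smul_zero]

lemma Etrans_smul (y c : K) (p : Polynomial K) :
    Etrans K y (c • p) = c • Etrans K y p := by
  rw [Etrans_eq_sum (N := p.natDegree + 1) (lt_of_le_of_lt (natDegree_smul_le c p) (by omega)) y,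
    Etrans]
  rw [Finset.smul_sum]
  apply Finset.sum_congr rfl
  intro k _
  rw [map_smul]
  rw [smul_comm]

lemma Etrans_C (y c : K) : Etrans K y (Polynomial.C c) = Polynomial.C c := by
  rw [Etrans]
  simp [Ffact_zero']

lemma Etrans_X (y : K) : Etrans K y Polynomial.X = Polynomial.X + Polynomial.C y := by
  rw [Etrans, Polynomial.natDegree_X]
  rw [Finset.sum_range_succ, Finset.sum_range_one]
  have h1 : fderivF K Polynomial.X = 1 := by
    rw [← Polynomial.monomial_one_one_eq_X, fderivF, Polynomial.lsum_apply,
      Polynomial.sum_monomial_index _ _ (by simp)]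
    simp
  simp [Ffact_zero', Ffact_succ, h1, Polynomial.smul_eq_C_mul]

lemma Etrans_eval_zero (y : K) (p : Polynomial K) :
    (Etrans K y p).eval 0 = p.eval y := by
  rw [Etrans]
  rw [Polynomial.eval_finset_sum]
  have : ∀ k ∈ Finset.range (p.natDegree + 1),
      ((y ^ k / (Ffact k : K)) • ((fderivF K ^ k) p)).eval 0 = p.coeff k * y ^ k := by
    intro k _
    rw [Polynomial.eval_smul, smul_eq_mul, ← Polynomial.coeff_zero_eq_eval_zero,
      fderivF_pow_coeff_zero]
    field_simp [Ffact_cast_ne_zero k]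
  rw [Finset.sum_congr rfl this, Polynomial.eval_eq_sum_range]

/-! ### Delta operator lemmas -/

variable {Q : Module.End K (Polynomial K)} {q : ℕ → Polynomial K}

lemma Q_one (hQ : DeltaOp K Q) : Q 1 = 0 := by
  obtain ⟨hSI, c, hc, hQX⟩ := hQ
  have h := hSI 1 Polynomial.X
  rw [hQX, Etrans_C, Etrans_X, map_add, hQX, add_eq_left] at h
  rwa [Polynomial.C_1] at h

lemma Q_C (hQ : DeltaOp K Q) (c : K) : Q (Polynomial.C c) = 0 := by
  rw [← mul_one (Polynomial.C c), ← Polynomial.smul_eq_C_mul, map_smul, Q_one hQ, smul_zero]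

lemma q_coeff_ne (hq : BasicSeq K Q q) (n : ℕ) : (q n).coeff n ≠ 0 :=
  Polynomial.coeff_ne_zero_of_eq_degree (hq.1 n)

lemma decomp (hq : BasicSeq K Q q) (n : ℕ) (p : Polynomial K)
    (hp : p.degree ≤ ((n+1 : ℕ) : WithBot ℕ)) :
    ∃ (a : K) (r : Polynomial K), p = a • q (n+1) + r ∧ r.degree ≤ (n : WithBot ℕ) ∧ (a = 0 → p = r) := by
  refine ⟨p.coeff (n+1) / (q (n+1)).coeff (n+1),
    p - (p.coeff (n+1) / (q (n+1)).coeff (n+1)) • q (n+1), by abel, ?_,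
    fun h0 => by rw [h0, zero_smul, sub_zero]⟩
  rw [Polynomial.degree_le_iff_coeff_zero]
  intro m hm
  have hm' : n + 1 ≤ m := by
    have : n < m := by exact_mod_cast hm
    omega
  rw [Polynomial.coeff_sub, Polynomial.coeff_smul, smul_eq_mul]
  rcases eq_or_lt_of_le hm' with he | hlt
  · rw [← he, div_mul_cancel₀ _ (q_coeff_ne hq (n+1)), sub_self]
  · have h1 : p.coeff m = 0 := by
      apply Polynomial.coeff_eq_zero_of_degree_lt
      apply lt_of_le_of_lt hp
      exact_mod_cast hlt
    have h2 : (q (n+1)).coeff m = 0 := by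
      apply Polynomial.coeff_eq_zero_of_degree_lt
      rw [hq.1]
      exact_mod_cast hlt
    rw [h1, h2, mul_zero, sub_zero]

lemma Q_degree_lt (hQ : DeltaOp K Q) (hq : BasicSeq K Q q) :
    ∀ (n : ℕ) (p : Polynomial K), p.degree ≤ (n : WithBot ℕ) → (Q p).degree < (n : WithBot ℕ) := by
  intro n
  induction n with
  | zero =>
    intro p hp
    have : p = Polynomial.C (p.coeff 0) := Polynomial.eq_C_of_degree_le_zero (by exact_mod_cast hp)
    rw [this, Q_C hQ]
    simpa using Nat.WithBot.lt_zero_iff.mpr Polynomial.degree_zero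
  | succ n ih =>
    intro p hp
    obtain ⟨a, r, hpr, hr, -⟩ := decomp hq n p hp
    rw [hpr, map_add, map_smul, hq.2.2.2 (n+1) (by omega)]
    have h1 : (a • ((Nat.fib (n+1) : K) • q ((n+1)-1))).degree < ((n+1 : ℕ) : WithBot ℕ) := by
      apply lt_of_le_of_lt (Polynomial.degree_smul_le _ _)
      apply lt_of_le_of_lt (Polynomial.degree_smul_le _ _)
      rw [hq.1, Nat.add_sub_cancel]
      exact_mod_cast Nat.lt_succ_self n
    have h2 : (Q r).degree < ((n+1 : ℕ) : WithBot ℕ) := by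
      apply lt_of_lt_of_le (ih r hr)
      exact_mod_cast Nat.le_succ n
    exact lt_of_le_of_lt (Polynomial.degree_add_le _ _) (max_lt h1 h2)

lemma Q_ker (hQ : DeltaOp K Q) (hq : BasicSeq K Q q) :
    ∀ (n : ℕ) (p : Polynomial K), p.degree ≤ (n : WithBot ℕ) → Q p = 0 → ∃ c, p = Polynomial.C c := by
  intro n
  induction n with
  | zero =>
    intro p hp _
    exact ⟨p.coeff 0, Polynomial.eq_C_of_degree_le_zero (by exact_mod_cast hp)⟩
  | succ n ih =>
    intro p hp hQp
    obtain ⟨a, r, hpr, hr, hz⟩ := decomp hq n p hp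
    rw [hpr, map_add, map_smul, hq.2.2.2 (n+1) (by omega), Nat.add_sub_cancel] at hQp
    have hcoeff := congrArg (fun f => Polynomial.coeff f n) hQp
    simp only [Polynomial.coeff_add, Polynomial.coeff_smul, smul_eq_mul,
      Polynomial.coeff_zero] at hcoeff
    have hQr : (Q r).coeff n = 0 :=
      Polynomial.coeff_eq_zero_of_degree_lt (Q_degree_lt hQ hq n r hr)
    rw [hQr, add_zero] at hcoeff
    have ha : a = 0 := by
      rcases mul_eq_zero.mp hcoeff with h | h
      · exact h
      · rcases mul_eq_zero.mp h with h' | h'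
        · exact absurd h' (fib_cast_ne_zero n)
        · exact absurd h' (q_coeff_ne hq n)
    rw [ha, zero_smul, zero_add] at hQp
    rw [hz ha]
    exact ih r hr hQp

lemma Q_cancel (hQ : DeltaOp K Q) (hq : BasicSeq K Q q) {p r : Polynomial K}
    (h1 : Q p = Q r) (h2 : p.eval 0 = r.eval 0) : p = r := by
  have h3 : Q (p - r) = 0 := by rw [map_sub, h1, sub_self]
  obtain ⟨c, hc⟩ := Q_ker hQ hq (p - r).natDegree _ Polynomial.degree_le_natDegree h3
  have : c = 0 := by
    have := congrArg (Polynomial.eval 0) hc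
    rw [Polynomial.eval_sub, h2, sub_self, Polynomial.eval_C] at this
    exact this.symm
  rw [this, Polynomial.C_0] at hc
  exact sub_eq_zero.mp hc

/-! ### Expansion lemmas -/

lemma Qsum_eq (hQ : DeltaOp K Q) (hq : BasicSeq K Q q) (n : ℕ) (c : ℕ → K) :
    Q (∑ k ∈ Finset.range (n+1+1), c k • q (n+1-k))
      = ∑ k ∈ Finset.range (n+1), (c k * (Nat.fib (n+1-k) : K)) • q (n-k) := by
  rw [map_sum, Finset.sum_range_succ]
  have hlast : Q (c (n+1) • q (n+1-(n+1))) = 0 := by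
    rw [map_smul, Nat.sub_self, hq.2.1, Q_one hQ, smul_zero]
  rw [hlast, add_zero]
  apply Finset.sum_congr rfl
  intro k hk
  rw [Finset.mem_range] at hk
  rw [map_smul, hq.2.2.2 (n+1-k) (by omega), smul_smul]
  have he : n + 1 - k - 1 = n - k := by omega
  rw [he]

lemma expand_lemma (hQ : DeltaOp K Q) (hq : BasicSeq K Q q) (s : ℕ → Polynomial K)
    (c0 : K) (hs0 : s 0 = Polynomial.C c0)
    (hss : ∀ n : ℕ, 1 ≤ n → Q (s n) = (Nat.fib n : K) • s (n-1)) :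
    ∀ n : ℕ, s n = ∑ k ∈ Finset.range (n+1), (fibnom K n k * (s k).eval 0) • q (n-k) := by
  intro n
  induction n with
  | zero =>
    rw [Finset.sum_range_one, Nat.sub_self, hq.2.1, fibnom_self, hs0]
    simp [Polynomial.smul_eq_C_mul]
  | succ n ih =>
    apply Q_cancel hQ hq
    · rw [hss (n+1) (by omega), Nat.add_sub_cancel, Qsum_eq hQ hq n, ih, Finset.smul_sum]
      apply Finset.sum_congr rfl
      intro k hk
      rw [Finset.mem_range] at hk
      rw [smul_smul]
      congr 1
      have hid := fibnom_id2 (K := K) (n := n) (k := k) (by omega)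
      linear_combination (-((s k).eval 0)) * hid
    · rw [Polynomial.eval_finset_sum, Finset.sum_range_succ]
      have h0 : ∀ k ∈ Finset.range (n+1),
          ((fibnom K (n+1) k * (s k).eval 0) • q (n+1-k)).eval 0 = 0 := by
        intro k hk
        rw [Finset.mem_range] at hk
        rw [Polynomial.eval_smul, hq.2.2.1 (n+1-k) (by omega), smul_zero]
      rw [Finset.sum_congr rfl h0, Finset.sum_const_zero, zero_add, Nat.sub_self, hq.2.1,
        fibnom_self]
      simp

lemma binom_forward (hQ : DeltaOp K Q) (hq : BasicSeq K Q q) (s : ℕ → Polynomial K)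
    (c0 : K) (hs0 : s 0 = Polynomial.C c0)
    (hss : ∀ n : ℕ, 1 ≤ n → Q (s n) = (Nat.fib n : K) • s (n-1)) (y : K) :
    ∀ n : ℕ, Etrans K y (s n)
      = ∑ k ∈ Finset.range (n+1), (fibnom K n k * (q (n-k)).eval y) • s k := by
  intro n
  induction n with
  | zero =>
    rw [hs0, Etrans_C, Finset.sum_range_one, Nat.sub_self, hq.2.1, fibnom_self, hs0]
    simp
  | succ n ih =>
    apply Q_cancel hQ hq
    · rw [hQ.1 y (s (n+1)), hss (n+1) (by omega), Nat.add_sub_cancel, Etrans_smul]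
      conv_rhs => rw [map_sum, Finset.sum_range_succ']
      rw [ih]
      have ht0 : Q ((fibnom K (n+1) 0 * (q (n+1-0)).eval y) • s 0) = 0 := by
        rw [map_smul, hs0, Q_C hQ, smul_zero]
      rw [ht0, add_zero, Finset.smul_sum]
      apply Finset.sum_congr rfl
      intro j hj
      rw [Finset.mem_range] at hj
      rw [map_smul, hss (j+1) (by omega), Nat.add_sub_cancel, smul_smul, smul_smul]
      congr 1
      have hid := fibnom_id1 (K := K) (n := n) (k := j) (by omega)
      have he : n + 1 - (j+1) = n - j := by omega
      rw [he]
      linear_combination (-((q (n-j)).eval y)) * hid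
    · rw [Etrans_eval_zero, Polynomial.eval_finset_sum]
      have hx := congrArg (Polynomial.eval y) (expand_lemma hQ hq s c0 hs0 hss (n+1))
      rw [Polynomial.eval_finset_sum] at hx
      rw [hx]
      apply Finset.sum_congr rfl
      intro k _
      rw [Polynomial.eval_smul, Polynomial.eval_smul, smul_eq_mul, smul_eq_mul]
      ring

/-- Sheffer F-Binomial Theorem with converse: `(s_n)` is Sheffer for `Q` iff
`E^y(∂_F) s_n = Σ_{k=0}^{n} C_F(n,k)·q_{n−k}(y)·s_k` for all `y` and `n`. -/
theorem sheffer_binomial (Q : Module.End K (Polynomial K)) (hQ : DeltaOp K Q)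
    (q : ℕ → Polynomial K) (hq : BasicSeq K Q q)
    (s : ℕ → Polynomial K) (hdeg : ∀ n : ℕ, (s n).degree = n)
    (hs0 : ∃ c : K, c ≠ 0 ∧ s 0 = Polynomial.C c) :
    ShefferSeq K Q s ↔
      ∀ (y : K) (n : ℕ), Etrans K y (s n) =
        ∑ k ∈ Finset.range (n + 1), (fibnom K n k * (q (n - k)).eval y) • s k := by
  obtain ⟨c0, hc0, hs0'⟩ := hs0
  constructor
  · rintro ⟨-, -, hss⟩
    intro y n
    exact binom_forward hQ hq s c0 hs0' hss y n
  · intro hI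
    refine ⟨hdeg, ⟨c0, hc0, hs0'⟩, ?_⟩
    have hex : ∀ n : ℕ, s n
        = ∑ k ∈ Finset.range (n+1), (fibnom K n k * (s k).eval 0) • q (n-k) := by
      intro n
      apply Polynomial.funext
      intro y
      have h1 := congrArg (Polynomial.eval 0) (hI y n)
      rw [Etrans_eval_zero, Polynomial.eval_finset_sum] at h1
      rw [h1, Polynomial.eval_finset_sum]
      apply Finset.sum_congr rfl
      intro k _
      rw [Polynomial.eval_smul, Polynomial.eval_smul, smul_eq_mul, smul_eq_mul]
      ring
    intro n hn
    obtain ⟨m, rfl⟩ : ∃ m, n = m + 1 := ⟨n-1, by omega⟩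
    rw [Nat.add_sub_cancel]
    calc Q (s (m+1))
        = Q (∑ k ∈ Finset.range (m+1+1), (fibnom K (m+1) k * (s k).eval 0) • q (m+1-k)) := by
          rw [← hex (m+1)]
      _ = ∑ k ∈ Finset.range (m+1),
            ((fibnom K (m+1) k * (s k).eval 0) * (Nat.fib (m+1-k) : K)) • q (m-k) :=
          Qsum_eq hQ hq m _
      _ = (Nat.fib (m+1) : K) • s m := by
          rw [hex m, Finset.smul_sum]
          apply Finset.sum_congr rfl
          intro k hk
          rw [Finset.mem_range] at hk
          rw [smul_smul]
          congr 1
          have hid := fibnom_id2 (K := K) (n := m) (k := k) (by omega)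
          linear_combination ((s k).eval 0) * hid
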